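/- For 0<q<1, α>-1, and |t|<2, Hahn's identity J^{(2)}_α(t;q) = (-t²/4;q)_∞ · J^{(1)}_α(t;q) holds. -/

import Mathlib

/-- The q-shifted factorial `(a;q)_n`. -/
noncomputable def qPoch (a q : ℂ) (n : ℕ) : ℂ := ∏ k ∈ Finset.range n, (1 - a * q ^ k)

/-- The infinite q-shifted factorial `(a;q)_∞`. -/
noncomputable def qPochInf (a q : ℂ) : ℂ := ∏' k : ℕ, (1 - a * q ^ k)

/-- The first Jackson q-Bessel function `J^{(1)}_α(t;q)` (for `|t| < 2`). -/
noncomputable def jacksonJ1 (α q : ℝ) (t : ℂ) : ℂ :=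
  qPochInf ((q : ℂ) ^ ((α : ℂ) + 1)) (q : ℂ) / qPochInf (q : ℂ) (q : ℂ) *
    ∑' n : ℕ, (-1) ^ n * (t / 2) ^ (2 * (n : ℂ) + (α : ℂ)) /
      (qPoch (q : ℂ) (q : ℂ) n * qPoch ((q : ℂ) ^ ((α : ℂ) + 1)) (q : ℂ) n)

/-- The second Jackson q-Bessel function `J^{(2)}_α(t;q)`. -/
noncomputable def jacksonJ2 (α q : ℝ) (t : ℂ) : ℂ :=
  qPochInf ((q : ℂ) ^ ((α : ℂ) + 1)) (q : ℂ) / qPochInf (q : ℂ) (q : ℂ) *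
    ∑' n : ℕ, (-1) ^ n * (q : ℂ) ^ ((n : ℂ) * ((α : ℂ) + (n : ℂ))) *
        (t / 2) ^ (2 * (n : ℂ) + (α : ℂ)) /
      (qPoch (q : ℂ) (q : ℂ) n * qPoch ((q : ℂ) ^ ((α : ℂ) + 1)) (q : ℂ) n)

/-!
Write `x = t²/4` and `c = q^{α+1}`. After the common factor `(t/2)^α`, both Jackson functions are
power series in `x`, and Euler's identity `(-x;q)_∞ = E(x) := ∑ₖ q^{k(k-1)/2} xᵏ / (q;q)ₖ`
(iterate `E(x) = (1 + x) E(qx)` and let `qⁿx → 0`) turns the right-hand side of Hahn's identity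
into a Cauchy product. Its `n`-th coefficient reduces to the terminating identity
`∑ₖ (-1)ᵏ q^{k(k-1)/2} [n,k]_q (cq^{n-k};q)ₖ = cⁿ q^{n(n-1)}`, proved by induction on `n` with
the q-Pascal rule.
-/

theorem Nat.choose_two_succ (n : ℕ) : (n + 1).choose 2 = n.choose 2 + n := by
  rw [Nat.choose_succ_succ', Nat.choose_one_right, add_comm]

open Finset Filter Topology

theorem qPoch_zero (a q : ℂ) : qPoch a q 0 = 1 := prod_range_zero _

theorem qPoch_succ (a q : ℂ) (n : ℕ) : qPoch a q (n + 1) = qPoch a q n * (1 - a * q ^ n) :=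
  prod_range_succ _ _

theorem qPoch_add (a q : ℂ) (m k : ℕ) :
    qPoch a q (m + k) = qPoch a q m * qPoch (a * q ^ m) q k := by
  simp only [qPoch, prod_range_add, pow_add, mul_assoc]

section

variable {q : ℂ}

def qBinom (q : ℂ) : ℕ → ℕ → ℂ
  | _, 0 => 1
  | 0, _ + 1 => 0
  | n + 1, k + 1 => qBinom q n (k + 1) + q ^ (n - k) * qBinom q n k

@[simp]
theorem qBinom_zero_right (n : ℕ) : qBinom q n 0 = 1 := by cases n <;> rfl

theorem qBinom_succ_succ (n k : ℕ) :
    qBinom q (n + 1) (k + 1) = qBinom q n (k + 1) + q ^ (n - k) * qBinom q n k := rfl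

theorem qBinom_eq_zero_of_lt {n k : ℕ} (h : n < k) : qBinom q n k = 0 := by
  induction n generalizing k with
  | zero => obtain ⟨k, rfl⟩ := Nat.exists_eq_succ_of_ne_zero h.ne'; rfl
  | succ n ih =>
    obtain ⟨k, rfl⟩ := Nat.exists_eq_succ_of_ne_zero (Nat.zero_lt_of_lt h).ne'
    rw [qBinom_succ_succ, ih (by omega), ih (by omega), mul_zero, add_zero]

theorem qBinom_mul_qPoch {n k : ℕ} (hk : k ≤ n) :
    qBinom q n k * (qPoch q q k * qPoch q q (n - k)) = qPoch q q n := by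
  induction n generalizing k with
  | zero => obtain rfl := Nat.le_zero.1 hk; simp [qPoch_zero]
  | succ n ih =>
    cases k with
    | zero => simp [qPoch_zero]
    | succ k =>
      have hkn : k ≤ n := by omega
      have h₁ : qBinom q n (k + 1) * (qPoch q q (k + 1) * qPoch q q (n - k)) =
          qPoch q q n * (1 - q ^ (n - k)) := by
        rcases hkn.lt_or_eq with hkn | rfl
        · obtain ⟨m, rfl⟩ : ∃ m, n = k + 1 + m := ⟨n - (k + 1), by omega⟩
          rw [show k + 1 + m - k = m + 1 by omega, qPoch_succ q q m,
            ← ih (by omega : k + 1 ≤ k + 1 + m), show k + 1 + m - (k + 1) = m by omega]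
          ring
        · simp [qBinom_eq_zero_of_lt (Nat.lt_succ_self k)]
      have hpow : q ^ (n - k) * q ^ (k + 1) = q * q ^ n := by
        rw [← pow_add, ← pow_succ']; congr 1; omega
      rw [Nat.add_sub_add_right, qBinom_succ_succ, qPoch_succ q q n]
      linear_combination h₁ + (q ^ (n - k) * (1 - q * q ^ k)) * ih hkn +
        q ^ (n - k) * qBinom q n k * qPoch q q (n - k) * qPoch_succ q q k - qPoch q q n * hpow

noncomputable def cauchyCoeff (q c : ℂ) (n k : ℕ) : ℂ :=
  (-1) ^ k * q ^ k.choose 2 * qBinom q n k * qPoch (c * q ^ (n - k)) q k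

@[simp]
theorem cauchyCoeff_zero_right (c : ℂ) (n : ℕ) : cauchyCoeff q c n 0 = 1 := by
  simp [cauchyCoeff, qPoch_zero]

theorem cauchyCoeff_of_lt (c : ℂ) {n k : ℕ} (h : n < k) : cauchyCoeff q c n k = 0 := by
  simp [cauchyCoeff, qBinom_eq_zero_of_lt h]

theorem cauchyCoeff_succ_succ (c : ℂ) {n k : ℕ} (hk : k ≤ n) :
    cauchyCoeff q c (n + 1) (k + 1) =
      cauchyCoeff q (c * q) n (k + 1) - (1 - c * q ^ n) * q ^ n * cauchyCoeff q c n k := by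
  have hshift : qBinom q n (k + 1) * qPoch (c * q ^ (n - k)) q (k + 1) =
      qBinom q n (k + 1) * qPoch (c * q * q ^ (n - (k + 1))) q (k + 1) := by
    rcases hk.lt_or_eq with hk | rfl
    · rw [mul_assoc c, ← pow_succ', Nat.sub_add_eq, Nat.sub_add_cancel (by omega)]
    · simp [qBinom_eq_zero_of_lt (Nat.lt_succ_self k)]
  have hsucc :
      qPoch (c * q ^ (n - k)) q (k + 1) = qPoch (c * q ^ (n - k)) q k * (1 - c * q ^ n) := by
    rw [qPoch_succ, mul_assoc, pow_sub_mul_pow q hk]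
  simp only [cauchyCoeff, Nat.add_sub_add_right, qBinom_succ_succ, Nat.choose_two_succ]
  linear_combination (-1) ^ (k + 1) * q ^ (k.choose 2 + k) * hshift +
    (-1) ^ (k + 1) * q ^ (k.choose 2 + k) * q ^ (n - k) * qBinom q n k * hsucc -
    (-1) ^ k * q ^ k.choose 2 * qBinom q n k * qPoch (c * q ^ (n - k)) q k * (1 - c * q ^ n) *
      pow_sub_mul_pow q hk

theorem sum_range_cauchyCoeff (c : ℂ) (n : ℕ) :
    ∑ k ∈ range (n + 1), cauchyCoeff q c n k = c ^ n * q ^ (2 * n.choose 2) := by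
  induction n generalizing c with
  | zero => simp
  | succ n ih =>
    have hshift : ∑ k ∈ range (n + 1), cauchyCoeff q (c * q) n (k + 1) + 1 =
        (c * q) ^ n * q ^ (2 * n.choose 2) := by
      rw [← cauchyCoeff_zero_right (c * q) n, ← sum_range_succ', sum_range_succ,
        cauchyCoeff_of_lt _ (Nat.lt_succ_self n), add_zero, ih]
    rw [sum_range_succ',
      sum_congr rfl fun k hk => cauchyCoeff_succ_succ c (mem_range_succ_iff.1 hk), sum_sub_distrib,
      ← mul_sum, ih, cauchyCoeff_zero_right, Nat.choose_two_succ]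
    linear_combination hshift

theorem one_sub_mul_pow_ne_zero {a : ℂ} (ha : ‖a‖ < 1) (hq : ‖q‖ ≤ 1) (n : ℕ) :
    1 - a * q ^ n ≠ 0 := by
  have hlt : ‖a * q ^ n‖ < 1 := by
    rw [norm_mul, norm_pow]
    exact (mul_le_of_le_one_right (norm_nonneg a) (pow_le_one₀ (norm_nonneg q) hq)).trans_lt ha
  intro h
  rw [← sub_eq_zero.1 h, norm_one] at hlt
  exact hlt.false

theorem qPoch_ne_zero {a : ℂ} (ha : ‖a‖ < 1) (hq : ‖q‖ ≤ 1) (n : ℕ) :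
    qPoch a q n ≠ 0 :=
  prod_ne_zero_iff.2 fun k _ => one_sub_mul_pow_ne_zero ha hq k

theorem tendsto_one_sub_mul_pow (a : ℂ) (hq : ‖q‖ < 1) :
    Tendsto (fun n => 1 - a * q ^ n) atTop (𝓝 1) := by
  simpa using tendsto_const_nhds.sub ((tendsto_pow_atTop_nhds_zero_of_norm_lt_one hq).const_mul a)

theorem summable_of_eq_mul_of_tendsto {R : Type*} [NormedRing R] [CompleteSpace R]
    {f g : ℕ → R} {L : R} (hL : ‖L‖ < 1) (hfg : ∀ n, f (n + 1) = f n * g n)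
    (hg : Tendsto g atTop (𝓝 L)) : Summable f := by
  obtain ⟨r, hLr, hr⟩ := exists_between hL
  refine summable_of_ratio_norm_eventually_le hr ?_
  filter_upwards [hg.norm.eventually_le_const hLr] with n hn
  rw [hfg n, mul_comm r]
  exact (norm_mul_le _ _).trans (mul_le_mul_of_nonneg_left hn (norm_nonneg _))

noncomputable def eulerTerm (q y : ℂ) (k : ℕ) : ℂ := q ^ k.choose 2 * y ^ k / qPoch q q k

theorem eulerTerm_succ (hq : ‖q‖ < 1) (y : ℂ) (k : ℕ) :
    eulerTerm q y (k + 1) = eulerTerm q y k * (q ^ k * y / (1 - q * q ^ k)) := by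
  have := qPoch_ne_zero hq hq.le k
  have := one_sub_mul_pow_ne_zero hq hq.le k
  rw [eulerTerm, eulerTerm, qPoch_succ, Nat.choose_two_succ]
  field_simp
  ring

theorem summable_eulerTerm (hq : ‖q‖ < 1) (y : ℂ) : Summable (eulerTerm q y) := by
  refine summable_of_eq_mul_of_tendsto (L := 0) (by simp) (eulerTerm_succ hq y) ?_
  simpa [Pi.div_def] using ((tendsto_pow_atTop_nhds_zero_of_norm_lt_one hq).mul_const y).div
    (tendsto_one_sub_mul_pow q hq) one_ne_zero

theorem eulerTerm_zero_right (y : ℂ) : eulerTerm q y 0 = 1 := by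
  simp [eulerTerm, qPoch_zero]

theorem eulerTerm_succ_eq_add (hq : ‖q‖ < 1) (y : ℂ) (k : ℕ) :
    eulerTerm q y (k + 1) = eulerTerm q (q * y) (k + 1) + y * eulerTerm q (q * y) k := by
  have := qPoch_ne_zero hq hq.le k
  have := one_sub_mul_pow_ne_zero hq hq.le k
  simp only [eulerTerm, qPoch_succ, Nat.choose_two_succ]
  field_simp
  ring

theorem tsum_eulerTerm_eq_one_add_mul (hq : ‖q‖ < 1) (y : ℂ) :
    ∑' k, eulerTerm q y k = (1 + y) * ∑' k, eulerTerm q (q * y) k := by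
  have hs := summable_eulerTerm hq (q * y)
  rw [(summable_eulerTerm hq y).tsum_eq_zero_add, tsum_congr (eulerTerm_succ_eq_add hq y),
    ((summable_nat_add_iff 1).2 hs).tsum_add (hs.mul_left y), tsum_mul_left,
    hs.tsum_eq_zero_add, eulerTerm_zero_right, eulerTerm_zero_right]
  ring

theorem tsum_eulerTerm_eq_prod_mul (hq : ‖q‖ < 1) (y : ℂ) (n : ℕ) :
    ∑' k, eulerTerm q y k =
      (∏ j ∈ range n, (1 + q ^ j * y)) * ∑' k, eulerTerm q (q ^ n * y) k := by
  induction n with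
  | zero => simp
  | succ n ih =>
    rw [ih, tsum_eulerTerm_eq_one_add_mul hq, prod_range_succ, ← mul_assoc q, ← pow_succ']
    ring

theorem tendsto_tsum_eulerTerm_pow_mul (hq : ‖q‖ < 1) (y : ℂ) :
    Tendsto (fun n => ∑' k, eulerTerm q (q ^ n * y) k) atTop (𝓝 1) := by
  have hzero : ∑' k, eulerTerm q 0 k = 1 := by
    rw [tsum_eq_single 0 (fun k hk => by simp [eulerTerm, hk]), eulerTerm_zero_right]
  rw [← hzero]
  refine tendsto_tsum_of_dominated_convergence (summable_eulerTerm hq y).norm (fun k => ?_)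
    (Eventually.of_forall fun n k => ?_)
  · have hcont : Continuous fun z => eulerTerm q z k := by unfold eulerTerm; fun_prop
    have hpow : Tendsto (fun n => q ^ n * y) atTop (𝓝 0) := by
      simpa using (tendsto_pow_atTop_nhds_zero_of_norm_lt_one hq).mul_const y
    exact (hcont.tendsto 0).comp hpow
  · have : eulerTerm q (q ^ n * y) k = (q ^ n) ^ k * eulerTerm q y k := by
      simp only [eulerTerm, mul_pow]; ring
    have hle : ‖(q ^ n) ^ k‖ ≤ 1 := by
      rw [← pow_mul, norm_pow]
      exact pow_le_one₀ (norm_nonneg q) hq.le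
    rw [this, norm_mul]
    exact mul_le_of_le_one_left (norm_nonneg _) hle

theorem qPochInf_neg_eq_tsum_eulerTerm (hq : ‖q‖ < 1) (y : ℂ) :
    qPochInf (-y) q = ∑' k, eulerTerm q y k := by
  have hmul : Multipliable fun k => 1 - -y * q ^ k := by
    simpa [mul_comm y] using
      Complex.multipliable_one_add_of_summable ((summable_geometric_of_norm_lt_one hq).mul_left y)
  have hprod :
      Tendsto (fun n => ∏ j ∈ range n, (1 + q ^ j * y)) atTop (𝓝 (qPochInf (-y) q)) := by
    simpa [qPochInf, mul_comm y] using hmul.hasProd.tendsto_prod_nat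
  have hlim := hprod.mul (tendsto_tsum_eulerTerm_pow_mul hq y)
  rw [mul_one] at hlim
  exact tendsto_nhds_unique hlim
    (tendsto_const_nhds.congr fun n => tsum_eulerTerm_eq_prod_mul hq y n)

variable {c : ℂ}

noncomputable def besselTerm (q c x : ℂ) (n : ℕ) : ℂ := (-x) ^ n / (qPoch q q n * qPoch c q n)

theorem summable_besselTerm (hq : ‖q‖ < 1) (hc : ‖c‖ < 1) {x : ℂ} (hx : ‖x‖ < 1) :
    Summable (besselTerm q c x) := by
  refine summable_of_eq_mul_of_tendsto (L := -x) (by rwa [norm_neg]) (fun n => ?_) ?_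
    (g := fun n => -x / ((1 - q * q ^ n) * (1 - c * q ^ n)))
  · have := qPoch_ne_zero hq hq.le n
    have := qPoch_ne_zero hc hq.le n
    have := one_sub_mul_pow_ne_zero hq hq.le n
    have := one_sub_mul_pow_ne_zero hc hq.le n
    rw [besselTerm, besselTerm, qPoch_succ, qPoch_succ, pow_succ]
    field_simp
  · simpa [Pi.div_def] using tendsto_const_nhds.div
      ((tendsto_one_sub_mul_pow q hq).mul (tendsto_one_sub_mul_pow c hq)) (by norm_num)

theorem eulerTerm_mul_besselTerm (hq : ‖q‖ < 1) (hc : ‖c‖ < 1) (x : ℂ) {n k : ℕ}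
    (hk : k ≤ n) :
    eulerTerm q x k * besselTerm q c x (n - k) = besselTerm q c x n * cauchyCoeff q c n k := by
  obtain ⟨m, rfl⟩ := Nat.exists_eq_add_of_le hk
  have hbinom := qBinom_mul_qPoch (q := q) hk
  have hsplit := qPoch_add c q m k
  rw [Nat.add_sub_cancel_left] at hbinom ⊢
  rw [add_comm m] at hsplit
  have := qPoch_ne_zero hq hq.le k
  have := qPoch_ne_zero hq hq.le m
  have := qPoch_ne_zero hc hq.le m
  have hB : qBinom q (k + m) k ≠ 0 := left_ne_zero_of_mul (hbinom ▸ qPoch_ne_zero hq hq.le _)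
  have hP : qPoch (c * q ^ m) q k ≠ 0 :=
    right_ne_zero_of_mul (hsplit ▸ qPoch_ne_zero hc hq.le _)
  rw [eulerTerm, besselTerm, besselTerm, cauchyCoeff, ← hbinom, hsplit, Nat.add_sub_cancel_left]
  field_simp
  have hsign : (-x) ^ k * (-1) ^ k = x ^ k := by rw [← mul_pow, neg_mul_neg, mul_one]
  rw [pow_add]
  linear_combination -(q ^ k.choose 2 * (-x) ^ m) * hsign

theorem tsum_eulerTerm_mul_tsum_besselTerm (hq : ‖q‖ < 1) (hc : ‖c‖ < 1) {x : ℂ}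
    (hx : ‖x‖ < 1) :
    (∑' k, eulerTerm q x k) * ∑' n, besselTerm q c x n =
      ∑' n, q ^ (2 * n.choose 2) * besselTerm q c (c * x) n := by
  rw [tsum_mul_tsum_eq_tsum_sum_range_of_summable_norm (summable_eulerTerm hq x).norm
    (summable_besselTerm hq hc hx).norm]
  refine tsum_congr fun n => ?_
  rw [sum_congr rfl fun k hk => eulerTerm_mul_besselTerm hq hc x (mem_range_succ_iff.1 hk),
    ← mul_sum, sum_range_cauchyCoeff]
  simp only [besselTerm]
  ring

end

namespace Complex

theorem cpow_two_mul_natCast_add {a : ℂ} (ha : -2 < a.re) (z : ℂ) (n : ℕ) :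
    z ^ (2 * (n : ℂ) + a) = (z ^ 2) ^ n * z ^ a := by
  rcases eq_or_ne z 0 with rfl | hz
  · rcases n with _ | n
    · simp
    · have hne : 2 * ((n + 1 : ℕ) : ℂ) + a ≠ 0 := fun h => by
        have := congrArg re h
        simp at this
        linarith [(n.cast_nonneg : (0 : ℝ) ≤ n)]
      rw [zero_cpow hne, zero_pow two_ne_zero, zero_pow n.succ_ne_zero, zero_mul]
  · rw [cpow_add _ _ hz, mul_comm (2 : ℂ), cpow_nat_mul, cpow_two]

theorem cpow_natCast_mul_add_natCast {q : ℂ} (hq : q ≠ 0) (a : ℂ) (n : ℕ) :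
    q ^ ((n : ℂ) * (a + n)) = (q ^ (a + 1)) ^ n * q ^ (2 * n.choose 2) := by
  have hexp : (n : ℂ) * (a + n) = (a + 1) * n + ((2 * n.choose 2 : ℕ) : ℂ) := by
    push_cast [Nat.cast_choose_two]
    ring
  rw [hexp, cpow_add _ _ hq, cpow_mul_nat, cpow_natCast]

end Complex

theorem jacksonJ1_eq_tsum_besselTerm {α : ℝ} (hα : -2 < α) (q : ℝ) (t : ℂ) :
    jacksonJ1 α q t = qPochInf ((q : ℂ) ^ ((α : ℂ) + 1)) q / qPochInf q q *
      ((∑' n, besselTerm q ((q : ℂ) ^ ((α : ℂ) + 1)) ((t / 2) ^ 2) n) *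
        (t / 2) ^ (α : ℂ)) := by
  rw [jacksonJ1, ← tsum_mul_right]
  congr 2 with n
  rw [Complex.cpow_two_mul_natCast_add (by simpa using hα), besselTerm, neg_pow ((t / 2) ^ 2)]
  ring

theorem jacksonJ2_eq_tsum_besselTerm {α q : ℝ} (hα : -2 < α) (hq : q ≠ 0) (t : ℂ) :
    jacksonJ2 α q t = qPochInf ((q : ℂ) ^ ((α : ℂ) + 1)) q / qPochInf q q *
      ((∑' n, (q : ℂ) ^ (2 * n.choose 2) *
        besselTerm q ((q : ℂ) ^ ((α : ℂ) + 1))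
          ((q : ℂ) ^ ((α : ℂ) + 1) * (t / 2) ^ 2) n) *
        (t / 2) ^ (α : ℂ)) := by
  rw [jacksonJ2, ← tsum_mul_right]
  congr 2 with n
  rw [Complex.cpow_two_mul_natCast_add (by simpa using hα),
    Complex.cpow_natCast_mul_add_natCast (Complex.ofReal_ne_zero.2 hq), besselTerm,
    neg_pow (_ * (t / 2) ^ 2)]
  ring

/-- Hahn's identity: `J^{(2)}_α(t;q) = (-t²/4;q)_∞ J^{(1)}_α(t;q)` for `|t| < 2`. -/
theorem stmt5 (q α : ℝ) (hq : 0 < q) (hq1 : q < 1) (hα : -1 < α)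
    (t : ℂ) (ht : ‖t‖ < 2) :
    jacksonJ2 α q t = qPochInf (-t ^ 2 / 4) (q : ℂ) * jacksonJ1 α q t := by
  have hq' : ‖(q : ℂ)‖ < 1 := by rwa [Complex.norm_real, Real.norm_of_nonneg hq.le]
  have hc : ‖(q : ℂ) ^ ((α : ℂ) + 1)‖ < 1 := by
    rw [Complex.norm_cpow_eq_rpow_re_of_pos hq]
    exact Real.rpow_lt_one hq.le hq1 (by simp; linarith)
  have hx : ‖(t / 2) ^ 2‖ < 1 := by
    rw [norm_pow, norm_div, Complex.norm_two]
    exact pow_lt_one₀ (by positivity) ((div_lt_one two_pos).2 ht) two_ne_zero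
  rw [jacksonJ2_eq_tsum_besselTerm (by linarith) hq.ne', jacksonJ1_eq_tsum_besselTerm (by linarith),
    ← tsum_eulerTerm_mul_tsum_besselTerm hq' hc hx, show -t ^ 2 / 4 = -(t / 2) ^ 2 by ring,
    qPochInf_neg_eq_tsum_eulerTerm hq']
  ring
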